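/- Let r and k be positive integers and let B be a finite simple graph with at least two vertices such that rk_r(B) = k+1 and every nonempty proper induced subgraph of B has r-splitter rank at most k. Then for every vertex s of B, the r-splitter rank of B − s equals exactly k. -/

import Mathlib

/-!
Splitter rank is monotone under taking induced subgraphs: for `A ⊆ A'`, a deletion of `s`
from an `r`-ball of `G[A']` is answered in the ball of `G[A]` with the same center by deleting
`s` if it lies there and the center otherwise, and what remains of the smaller ball lies inside
what remains of the larger one. The same answer, played against deleting `s` from the whole
vertex set, shows that deleting a vertex lowers the rank by at most one, so `rk_r(B − s) ≥ k`;
minimality gives `rk_r(B − s) ≤ k`.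
-/

open Classical

/-- The closed `r`-neighborhood of `c` inside the induced subgraph `G[A]`:
all vertices of `A` joined to `c` by a walk of length at most `r` staying in `A`. -/
noncomputable def ball {V : Type*} (G : SimpleGraph V) (r : ℕ) (A : Finset V) (c : V) :
    Finset V :=
  A.filter (fun v => ∃ p : G.Walk c v, p.length ≤ r ∧ ∀ x ∈ p.support, x ∈ A)

/-- The `r`-splitter rank of the induced subgraph `G[A]` (with `rank ∅ = 0`). -/
noncomputable def splitterRank {V : Type*} [DecidableEq V] (G : SimpleGraph V) (r : ℕ)
    (A : Finset V) : ℕ :=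
  if _ : A.Nonempty then
    1 + A.attach.sup (fun c =>
      (ball G r A c.1).attach.inf'
        (Finset.attach_nonempty_iff.2 ⟨c.1, Finset.mem_filter.2 ⟨c.2,
          SimpleGraph.Walk.nil, by simp, by simp [c.2]⟩⟩)
        (fun s => splitterRank G r ((ball G r A c.1).erase s.1)))
  else 0
termination_by A.card
decreasing_by
  exact lt_of_lt_of_le (Finset.card_erase_lt_of_mem s.2)
    (Finset.card_le_card (Finset.filter_subset _ _))

theorem Finset.exists_erase_subset_erase {α : Type*} [DecidableEq α] {A B : Finset α}
    (hAB : A ⊆ B) (hA : A.Nonempty) (s : α) : ∃ t ∈ A, A.erase t ⊆ B.erase s := by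
  by_cases hs : s ∈ A
  · exact ⟨s, hs, Finset.erase_subset_erase s hAB⟩
  · obtain ⟨t, ht⟩ := hA
    refine ⟨t, ht, fun x hx => Finset.mem_erase.2 ⟨?_, hAB (Finset.mem_of_mem_erase hx)⟩⟩
    exact ne_of_mem_of_not_mem (Finset.mem_of_mem_erase hx) hs

section

variable {V : Type*} (G : SimpleGraph V) (r : ℕ)

theorem ball_subset (A : Finset V) (c : V) : ball G r A c ⊆ A :=
  Finset.filter_subset _ _

theorem mem_ball_self {A : Finset V} {c : V} (hc : c ∈ A) : c ∈ ball G r A c :=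
  Finset.mem_filter.2 ⟨hc, SimpleGraph.Walk.nil, by simp, by simp [hc]⟩

theorem ball_mono {A B : Finset V} (hAB : A ⊆ B) (c : V) : ball G r A c ⊆ ball G r B c := by
  intro x hx
  obtain ⟨hxA, p, hp, hsupp⟩ := Finset.mem_filter.1 hx
  exact Finset.mem_filter.2 ⟨hAB hxA, p, hp, fun y hy => hAB (hsupp y hy)⟩

variable [DecidableEq V]

@[simp]
theorem splitterRank_empty : splitterRank G r ∅ = 0 := by
  rw [splitterRank, dif_neg Finset.not_nonempty_empty]

theorem splitterRank_mono {A B : Finset V} (hAB : A ⊆ B) :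
    splitterRank G r A ≤ splitterRank G r B := by
  induction B using Finset.strongInduction generalizing A with
  | H B ih =>
  rcases A.eq_empty_or_nonempty with rfl | hA
  · simp
  rw [splitterRank, splitterRank, dif_pos hA, dif_pos (hA.mono hAB)]
  refine Nat.add_le_add_left (Finset.sup_le fun c _ => ?_) 1
  refine le_trans ?_ (Finset.le_sup (Finset.mem_attach _ ⟨c.1, hAB c.2⟩))
  refine Finset.le_inf' _ _ fun s _ => ?_
  obtain ⟨t, ht, hsub⟩ := Finset.exists_erase_subset_erase (ball_mono G r hAB c.1)
    ⟨c.1, mem_ball_self G r c.2⟩ s.1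
  have hlt : (ball G r B c.1).erase s.1 ⊂ B :=
    Finset.ssubset_of_ssubset_of_subset (Finset.erase_ssubset s.2) (ball_subset G r B c.1)
  exact (Finset.inf'_le _ (Finset.mem_attach _ ⟨t, ht⟩)).trans (ih _ hlt hsub)

theorem splitterRank_le_splitterRank_erase_add_one (A : Finset V) (s : V) :
    splitterRank G r A ≤ splitterRank G r (A.erase s) + 1 := by
  rcases A.eq_empty_or_nonempty with rfl | hA
  · simp
  rw [splitterRank, dif_pos hA, add_comm]
  refine Nat.add_le_add_right (Finset.sup_le fun c _ => ?_) 1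
  obtain ⟨t, ht, hsub⟩ := Finset.exists_erase_subset_erase (ball_subset G r A c.1)
    ⟨c.1, mem_ball_self G r c.2⟩ s
  exact (Finset.inf'_le _ (Finset.mem_attach _ ⟨t, ht⟩)).trans (splitterRank_mono G r hsub)

end

theorem minimal_all_progressing_general {V : Type*} [Fintype V] [DecidableEq V]
    (G : SimpleGraph V) (r k : ℕ) (h2 : 2 ≤ Fintype.card V)
    (hrk : splitterRank G r Finset.univ = k + 1)
    (hmin : ∀ A : Finset V, A.Nonempty → A ⊂ Finset.univ → splitterRank G r A ≤ k) :
    ∀ s : V, splitterRank G r (Finset.univ.erase s) = k := by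
  intro s
  have hne : (Finset.univ.erase s).Nonempty := by
    rw [← Finset.card_pos, Finset.card_erase_of_mem (Finset.mem_univ s), Finset.card_univ]
    omega
  have hdrop := splitterRank_le_splitterRank_erase_add_one G r Finset.univ s
  have hle := hmin _ hne (Finset.erase_ssubset (Finset.mem_univ s))
  omega

/-- In a minimal graph of `r`-splitter rank `k+1`, deleting any vertex yields rank exactly `k`. -/
theorem minimal_all_progressing {V : Type*} [Fintype V] [DecidableEq V]
    (G : SimpleGraph V) (r k : ℕ) (hr : 0 < r) (hk : 0 < k) (h2 : 2 ≤ Fintype.card V)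
    (hrk : splitterRank G r Finset.univ = k + 1)
    (hmin : ∀ A : Finset V, A.Nonempty → A ⊂ Finset.univ → splitterRank G r A ≤ k) :
    ∀ s : V, splitterRank G r (Finset.univ.erase s) = k :=
  minimal_all_progressing_general G r k h2 hrk hmin
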